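/- For every infinite set I ⊆ ℕ, the set M_I = ⋃_{n∈I} M_n is dense in [0,1], and the set A_I = [0,1] \ D_I is (upper) porous in ℝ. -/

import Mathlib

/-! Fix `n = m + 1 ∈ I`. Each `x ∈ [0, 1]` lies in a triadic interval `[3i, 3i + 3] / 3ⁿ`, whose
middle third `(3i + 1, 3i + 2) / 3ⁿ` is a component of `Dₙ` contained in `B(x, 2 / 3ⁿ)`.
Its left endpoint is a point of `Mₙ` within `2 / 3ⁿ` of `x`, and the component itself is a ball of
radius `(2 / 3ⁿ) / 4` missing `A_I`. As `I` is infinite, `3⁻ⁿ` becomes arbitrarily small. -/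

open Metric Filter Set Topology

/-- γ(x,R,M): the supremum of radii r>0 of open balls contained in B(x,R) \ M
(equal to 0 if no such ball exists, by `Real.sSup_empty`). -/
noncomputable def porGamma {X : Type*} [MetricSpace X] (x : X) (R : ℝ) (M : Set X) : ℝ :=
  sSup {r : ℝ | 0 < r ∧ ∃ z : X, Metric.ball z r ⊆ Metric.ball x R \ M}

/-- `M` is lower porous at `x`: liminf_{R→0+} 2γ(x,R,M)/R > 0. -/
def LowerPorousAt {X : Type*} [MetricSpace X] (M : Set X) (x : X) : Prop :=
  0 < Filter.liminf (fun R => 2 * porGamma x R M / R) (nhdsWithin 0 (Set.Ioi 0))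

/-- `M` is (upper) porous at `x`: limsup_{R→0+} 2γ(x,R,M)/R > 0. -/
def UpperPorousAt {X : Type*} [MetricSpace X] (M : Set X) (x : X) : Prop :=
  0 < Filter.limsup (fun R => 2 * porGamma x R M / R) (nhdsWithin 0 (Set.Ioi 0))

/-- A set is lower porous if it is lower porous at each of its points. -/
def LowerPorous {X : Type*} [MetricSpace X] (M : Set X) : Prop :=
  ∀ x ∈ M, LowerPorousAt M x

/-- A set is (upper) porous if it is porous at each of its points. -/
def UpperPorous {X : Type*} [MetricSpace X] (M : Set X) : Prop :=
  ∀ x ∈ M, UpperPorousAt M x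

/-- A set is σ-lower porous if it is a countable union of lower porous sets. -/
def SigmaLowerPorous {X : Type*} [MetricSpace X] (A : Set X) : Prop :=
  ∃ f : ℕ → Set X, (∀ n, LowerPorous (f n)) ∧ A = ⋃ n, f n

/-- A set is σ-(upper) porous if it is a countable union of porous sets. -/
def SigmaUpperPorous {X : Type*} [MetricSpace X] (A : Set X) : Prop :=
  ∃ f : ℕ → Set X, (∀ n, UpperPorous (f n)) ∧ A = ⋃ n, f n

/-- The open sets `D_n ⊆ (0,1)`; `D_0 = ∅` and for `n ≥ 1`,
`D_n = ⋃_{i=0}^{3^{n-1}-1} ((1+3i)/3^n, (2+3i)/3^n)`. -/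
noncomputable def Dset : ℕ → Set ℝ
  | 0 => ∅
  | (n + 1) =>
      ⋃ i ∈ Finset.range (3 ^ n),
        Set.Ioo ((1 + 3 * (i : ℝ)) / 3 ^ (n + 1)) ((2 + 3 * (i : ℝ)) / 3 ^ (n + 1))

/-- `M_n = ∂D_n`, the boundary of `D_n` in `ℝ`. -/
noncomputable def Mset (n : ℕ) : Set ℝ := frontier (Dset n)

/-- `D_I = ⋃_{n ∈ I} D_n`. -/
noncomputable def DsetI (I : Set ℕ) : Set ℝ := ⋃ n ∈ I, Dset n

/-- `M_I = ⋃_{n ∈ I} M_n`. -/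
noncomputable def MsetI (I : Set ℕ) : Set ℝ := ⋃ n ∈ I, Mset n

/-- `A_I = [0,1] \ D_I`. -/
noncomputable def AsetI (I : Set ℕ) : Set ℝ := Set.Icc 0 1 \ DsetI I

section Porosity

variable {E : Type*} [NormedAddCommGroup E] [NormedSpace ℝ E] [Nontrivial E]

lemma le_of_ball_subset_ball {x z : E} {r R : ℝ} (hr : 0 < r) (h : ball z r ⊆ ball x R) :
    r ≤ R := by
  have hR : 0 < R := dist_nonneg.trans_lt (h (mem_ball_self hr))
  have := (diam_mono h isBounded_ball).trans (diam_ball hR.le)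
  rw [diam_ball_eq z hr.le] at this
  linarith

lemma le_porGamma {x z : E} {r R : ℝ} {M : Set E} (hr : 0 < r) (h : ball z r ⊆ ball x R \ M) :
    r ≤ porGamma x R M :=
  le_csSup ⟨R, fun _ ⟨hr', _, h'⟩ => le_of_ball_subset_ball hr' (h'.trans sdiff_subset)⟩
    ⟨hr, z, h⟩

lemma porGamma_le (x : E) (M : Set E) {R : ℝ} (hR : 0 ≤ R) : porGamma x R M ≤ R :=
  Real.sSup_le (fun _ ⟨hr, _, h⟩ => le_of_ball_subset_ball hr (h.trans sdiff_subset)) hR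

lemma upperPorousAt_of_frequently_ball {x : E} {M : Set E} {κ : ℝ} (hκ : 0 < κ)
    (h : ∃ᶠ R in 𝓝[>] 0, ∃ z, ball z (κ * R) ⊆ ball x R \ M) : UpperPorousAt M x := by
  have hbdd : IsBoundedUnder (· ≤ ·) (𝓝[>] (0 : ℝ)) (fun R => 2 * porGamma x R M / R) := by
    refine isBoundedUnder_of_eventually_le (a := 2) ?_
    filter_upwards [self_mem_nhdsWithin] with R (hR : 0 < R)
    rw [div_le_iff₀ hR]
    linarith [porGamma_le x M hR.le]
  have hfreq : ∃ᶠ R in 𝓝[>] (0 : ℝ), 2 * κ ≤ 2 * porGamma x R M / R := by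
    refine (h.and_eventually self_mem_nhdsWithin).mono fun R ⟨⟨z, hz⟩, (hR : 0 < R)⟩ => ?_
    rw [le_div_iff₀ hR]
    linarith [le_porGamma (mul_pos hκ hR) hz]
  exact (mul_pos two_pos hκ).trans_le (le_limsup_of_frequently_le hfreq hbdd)

end Porosity

lemma exists_nat_lt_le_mul_le_succ {N : ℕ} (hN : 0 < N) {x : ℝ} (hx : x ∈ Icc (0 : ℝ) 1) :
    ∃ i < N, (i : ℝ) ≤ x * N ∧ x * N ≤ i + 1 := by
  obtain ⟨hx0, hx1⟩ := hx
  rcases hx1.lt_or_eq with hx1 | rfl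
  · have hxN : x * N < N := by
      nlinarith [show (0 : ℝ) < N by exact_mod_cast hN]
    refine ⟨⌊x * N⌋₊, ?_, Nat.floor_le (by positivity), (Nat.lt_floor_add_one _).le⟩
    exact_mod_cast (Nat.floor_le (by positivity)).trans_lt hxN
  · refine ⟨N - 1, by omega, ?_, ?_⟩ <;> push_cast [Nat.cast_sub hN] <;> linarith

lemma isOpen_Dset (n : ℕ) : IsOpen (Dset n) := by
  cases n with
  | zero => exact isOpen_empty
  | succ m => exact isOpen_biUnion fun _ _ => isOpen_Ioo

lemma Ioo_subset_Dset {m i : ℕ} (hi : i < 3 ^ m) :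
    Ioo ((1 + 3 * (i : ℝ)) / 3 ^ (m + 1)) ((2 + 3 * (i : ℝ)) / 3 ^ (m + 1)) ⊆ Dset (m + 1) :=
  subset_biUnion_of_mem (u := fun j : ℕ => Ioo ((1 + 3 * (j : ℝ)) / 3 ^ (m + 1))
    ((2 + 3 * (j : ℝ)) / 3 ^ (m + 1))) (Finset.mem_coe.2 (Finset.mem_range.2 hi))

lemma left_mem_Mset {m i : ℕ} (hi : i < 3 ^ m) :
    (1 + 3 * (i : ℝ)) / 3 ^ (m + 1) ∈ Mset (m + 1) := by
  have h3 : (0 : ℝ) < 3 ^ (m + 1) := by positivity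
  rw [Mset, (isOpen_Dset _).frontier_eq]
  refine ⟨closure_mono (Ioo_subset_Dset hi) ?_, fun hmem => ?_⟩
  · have hlt : (1 + 3 * (i : ℝ)) / 3 ^ (m + 1) < (2 + 3 * (i : ℝ)) / 3 ^ (m + 1) := by
      gcongr; norm_num
    rw [closure_Ioo hlt.ne]
    exact left_mem_Icc.2 hlt.le
  · obtain ⟨j, -, hj1, hj2⟩ := mem_iUnion₂.1 hmem
    rw [div_lt_div_iff_of_pos_right h3] at hj1 hj2
    have hji : j < i := by exact_mod_cast (by linarith : (j : ℝ) < i)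
    have hij : 3 * i < 1 + 3 * j := by exact_mod_cast (by linarith : (3 * i : ℝ) < 1 + 3 * j)
    omega

lemma exists_Ioo_subset_ball (m : ℕ) {x : ℝ} (hx : x ∈ Icc (0 : ℝ) 1) :
    ∃ i : ℕ, i < 3 ^ m ∧
      Ioo ((1 + 3 * (i : ℝ)) / 3 ^ (m + 1)) ((2 + 3 * (i : ℝ)) / 3 ^ (m + 1)) ⊆
        ball x (2 / 3 ^ (m + 1)) := by
  obtain ⟨i, hi, hix, hxi⟩ := exists_nat_lt_le_mul_le_succ (N := 3 ^ m) (by positivity) hx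
  refine ⟨i, hi, ?_⟩
  have h3 : (0 : ℝ) < 3 ^ (m + 1) := by positivity
  push_cast at hix hxi
  rw [Real.ball_eq_Ioo]
  apply Ioo_subset_Ioo <;> rw [← sub_nonneg] <;> field_simp <;> rw [pow_succ] <;> nlinarith

lemma exists_succ_mem_two_div_pow_lt {I : Set ℕ} (hI : I.Infinite) {ε : ℝ} (hε : 0 < ε) :
    ∃ m, m + 1 ∈ I ∧ 2 / (3 : ℝ) ^ (m + 1) < ε := by
  have hlim : Tendsto (fun n : ℕ => 2 / (3 : ℝ) ^ n) atTop (𝓝 0) :=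
    tendsto_const_nhds.div_atTop (tendsto_pow_atTop_atTop_of_one_lt (by norm_num))
  obtain ⟨n, hnI, hn1, hnε⟩ := ((Nat.frequently_atTop_iff_infinite.2 hI).and_eventually
    ((eventually_ge_atTop 1).and (hlim.eventually (gt_mem_nhds hε)))).exists
  obtain ⟨m, rfl⟩ := Nat.exists_eq_add_of_le' hn1
  exact ⟨m, hnI, hnε⟩

theorem MsetI_dense_and_AsetI_porous (I : Set ℕ) (hI : I.Infinite) :
    Set.Icc (0 : ℝ) 1 ⊆ closure (MsetI I) ∧ UpperPorous (AsetI I) := by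
  refine ⟨fun x hx => Metric.mem_closure_iff.2 fun ε hε => ?_, fun x hx => ?_⟩
  · obtain ⟨m, hmI, hm⟩ := exists_succ_mem_two_div_pow_lt hI hε
    obtain ⟨i, hi, hsub⟩ := exists_Ioo_subset_ball m hx
    set s : ℝ := 3 ^ (m + 1)
    have hlt : (1 + 3 * (i : ℝ)) / s < (2 + 3 * (i : ℝ)) / s := by gcongr; norm_num
    rw [Real.ball_eq_Ioo, Ioo_subset_Ioo_iff hlt] at hsub
    refine ⟨_, mem_biUnion hmI (left_mem_Mset hi), ?_⟩
    rw [Real.dist_eq, abs_sub_lt_iff]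
    constructor <;> linarith
  · refine upperPorousAt_of_frequently_ball (κ := 1 / 4) (by norm_num)
      ((nhdsGT_basis 0).frequently_iff.2 fun ε hε => ?_)
    obtain ⟨m, hmI, hm⟩ := exists_succ_mem_two_div_pow_lt hI hε
    obtain ⟨i, hi, hsub⟩ := exists_Ioo_subset_ball m hx.1
    refine ⟨2 / 3 ^ (m + 1), ⟨by positivity, hm⟩, (3 * (i : ℝ) + 3 / 2) / 3 ^ (m + 1), ?_⟩
    have hball : ball ((3 * (i : ℝ) + 3 / 2) / 3 ^ (m + 1)) (1 / 4 * (2 / 3 ^ (m + 1))) =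
        Ioo ((1 + 3 * (i : ℝ)) / 3 ^ (m + 1)) ((2 + 3 * (i : ℝ)) / 3 ^ (m + 1)) := by
      rw [Real.ball_eq_Ioo]; congr 1 <;> field_simp <;> ring
    rw [hball]
    exact subset_sdiff.2 ⟨hsub, disjoint_left.2 fun y hy hyA =>
      hyA.2 (mem_biUnion hmI (Ioo_subset_Dset hi hy))⟩
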